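/- Fix k = 1 and pattern T with T_ℓ = 1 iff ℓ ∈ {0,2}. Let G_∨ be the NEAR-OR gadget for k = 1 (3-sun {w,y,z,y',q,z'} with operands x_1,...,x_ℓ attached to w) and G any graph intersecting the gadget exactly in {x_1,...,x_ℓ}; let H be their union. If G admits a PNE s with Σ_i s_{x_i} ∉ {0, 2}, then H admits a PNE t extending s in which q is active and all of w, y, z, y', z' are inactive. -/

import Mathlib

/-- Number of active neighbors. -/
noncomputable def degA {Ω : Type} (Adj : Ω → Ω → Prop) (s : Ω → Bool) (v : Ω) : ℕ :=
  Set.ncard {u | Adj v u ∧ s u = true}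

/-- PNE for the picky pattern `T_ℓ = 1` iff `ℓ ∈ {0, k+1}`. -/
def isPNE {Ω : Type} (k : ℕ) (Adj : Ω → Ω → Prop) (s : Ω → Bool) : Prop :=
  ∀ v, s v = true ↔ (degA Adj s v = 0 ∨ degA Adj s v = k + 1)

/-- Edges of the 3-sun on vertices `0 = w, 1 = y, 2 = z, 3 = y', 4 = q, 5 = z'`. -/
def sunEdges : List (Fin 6 × Fin 6) :=
  [(0, 1), (0, 2), (1, 2), (1, 3), (1, 4), (2, 4), (2, 5), (3, 4), (4, 5)]

/-- Adjacency relation of the 3-sun. -/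
def sunAdj (a b : Fin 6) : Prop := (a, b) ∈ sunEdges ∨ (b, a) ∈ sunEdges

/-- The union `H` of an external graph `G` on `V` (sharing exactly the operand
vertices `x i`) with the NEAR-OR gadget for `k = 1`: the 3-sun on `Fin 6`, whose
top vertex `w = 0` is adjacent to every operand `x i`. -/
def adjH {V : Type} {l : ℕ} (AdjV : V → V → Prop) (x : Fin l → V) :
    (V ⊕ Fin 6) → (V ⊕ Fin 6) → Prop
  | Sum.inl a, Sum.inl b => AdjV a b
  | Sum.inl a, Sum.inr g => g = 0 ∧ ∃ i, a = x i
  | Sum.inr g, Sum.inl a => g = 0 ∧ ∃ i, a = x i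
  | Sum.inr g, Sum.inr g' => sunAdj g g'

instance : DecidableRel sunAdj := fun _ _ => inferInstanceAs (Decidable (_ ∨ _))

/-! With `q` the only active vertex of the 3-sun, `w` has no active neighbour in the gadget and
every other gadget vertex exactly one (namely `q`, which has no active neighbour at all), so
`y, z, y', z'` are correctly inactive and `q` correctly active. The operands see only `w`, which
is inactive, so `G` keeps its own equilibrium; and `w` sees exactly the active operands, whose
number is neither `0` nor `2`, so `w` is correctly inactive. -/

theorem degA_eq_card_filter {Ω : Type} [Fintype Ω] (Adj : Ω → Ω → Prop) [DecidableRel Adj]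
    (s : Ω → Bool) (v : Ω) :
    degA Adj s v = (Finset.univ.filter fun u => Adj v u ∧ s u = true).card := by
  rw [degA, ← Set.ncard_coe_finset, Finset.coe_filter]
  simp only [Finset.mem_univ, true_and]

theorem degA_sunAdj_only_q (g : Fin 6) :
    degA sunAdj (fun g : Fin 6 => decide (g = 4)) g = if g = 0 ∨ g = 4 then 0 else 1 := by
  rw [degA_eq_card_filter]
  revert g
  decide

section Gadget

variable {V : Type} {l : ℕ} (AdjV : V → V → Prop) (x : Fin l → V) (s : V → Bool)
  (σ : Fin 6 → Bool)

theorem degA_adjH_inl (hσ : σ 0 = false) (a : V) :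
    degA (adjH AdjV x) (Sum.elim s σ) (Sum.inl a) = degA AdjV s a := by
  have hset : {u | adjH AdjV x (Sum.inl a) u ∧ Sum.elim s σ u = true}
      = Sum.inl '' {b | AdjV a b ∧ s b = true} := by
    ext (b | g)
    · simp [adjH]
    · simp only [Set.mem_ofPred_eq, Set.mem_image, reduceCtorEq, and_false, exists_false,
        iff_false, not_and, adjH, Sum.elim_inr]
      rintro ⟨rfl, -⟩
      simp [hσ]
  rw [degA, degA, hset, Set.ncard_image_of_injective _ Sum.inl_injective]

theorem degA_adjH_inr (hx : Function.Injective x) (g : Fin 6) :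
    degA (adjH AdjV x) (Sum.elim s σ) (Sum.inr g)
      = Set.ncard {i | g = 0 ∧ s (x i) = true} + degA sunAdj σ g := by
  have hset : {u | adjH AdjV x (Sum.inr g) u ∧ Sum.elim s σ u = true}
      = (Sum.inl ∘ x) '' {i | g = 0 ∧ s (x i) = true}
        ∪ Sum.inr '' {g' | sunAdj g g' ∧ σ g' = true} := by
    ext (b | g')
    · simp only [adjH, Set.mem_ofPred_eq, Sum.elim_inl, Set.mem_union, Set.mem_image,
        Function.comp_apply, Sum.inl.injEq, reduceCtorEq, and_false, exists_false, or_false]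
      constructor
      · rintro ⟨⟨rfl, i, rfl⟩, hi⟩
        exact ⟨i, ⟨rfl, hi⟩, rfl⟩
      · rintro ⟨i, ⟨rfl, hi⟩, rfl⟩
        exact ⟨⟨rfl, i, rfl⟩, hi⟩
    · simp [adjH]
  have hdisj : Disjoint ((Sum.inl ∘ x) '' {i | g = 0 ∧ s (x i) = true})
      (Sum.inr '' {g' | sunAdj g g' ∧ σ g' = true}) := by
    rw [Set.disjoint_left]
    rintro _ ⟨i, -, rfl⟩ ⟨g', -, h⟩
    exact Sum.inr_ne_inl h
  rw [degA, degA, hset, Set.ncard_union_eq hdisj (Set.toFinite _) (Set.toFinite _),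
    Set.ncard_image_of_injective _ (Sum.inl_injective.comp hx),
    Set.ncard_image_of_injective _ Sum.inr_injective]

end Gadget

theorem stmt15_general (V : Type) (l : ℕ)
    (AdjV : V → V → Prop)
    (x : Fin l → V) (hx : Function.Injective x)
    (s : V → Bool) (hs : isPNE 1 AdjV s)
    (hcount : Set.ncard {i : Fin l | s (x i) = true} ≠ 0 ∧
              Set.ncard {i : Fin l | s (x i) = true} ≠ 2) :
    isPNE 1 (adjH AdjV x)
      (Sum.elim s (fun g : Fin 6 => decide (g = 4))) := by
  rintro (a | g)
  · rw [degA_adjH_inl AdjV x s _ rfl]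
    exact hs a
  · rw [degA_adjH_inr AdjV x s _ hx, degA_sunAdj_only_q]
    fin_cases g <;> simp [hcount.1, hcount.2]

/-- Permissiveness of the NEAR-OR gadget for `k = 1`: if the external graph `G`
admits a PNE `s` in which the number of active operands is neither `0` nor `2`,
then the extension of `s` to the union graph `H` in which `q` is active and
`w, y, z, y', z'` are inactive is a PNE of `H`. -/
theorem stmt15 (V : Type) [Fintype V] (l : ℕ)
    (AdjV : V → V → Prop) (hsym : Symmetric AdjV) (hirr : Irreflexive AdjV)
    (x : Fin l → V) (hx : Function.Injective x)
    (s : V → Bool) (hs : isPNE 1 AdjV s)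
    (hcount : Set.ncard {i : Fin l | s (x i) = true} ≠ 0 ∧
              Set.ncard {i : Fin l | s (x i) = true} ≠ 2) :
    isPNE 1 (adjH AdjV x)
      (Sum.elim s (fun g : Fin 6 => decide (g = 4))) :=
  stmt15_general V l AdjV x hx s hs hcount
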